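/- arXiv:2009.01064 — 4 statements merged into one kernel-verified Lean document; each statement's English description precedes it below -/
import Mathlib

section
/- Let B be a Banach *-algebra, I a (not necessarily closed) two-sided *-ideal of B, and π : I → B(H) a *-homomorphism into the bounded operators on a Hilbert space (or more generally the adjointable operators on a Hilbert C*-module). Then π is contractive with respect to the norm on I inherited from B; that is, ‖π(a)‖ ≤ ‖a‖ for all a ∈ I. -/
/-!
Fix ξ ∈ H. Then φ(x) = re⟪π x ξ, ξ⟫ is additive on I and φ(w*w) = ‖π(w)ξ‖² ≥ 0. If d is
self-adjoint with ‖d‖ < 1, the contraction z ↦ (d + z²)/2 of the self-adjoint part of the ball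
of radius ‖d‖ has a fixed point y, i.e. (1 - y)² = 1 - d in the unitization. For b ∈ I this
writes b*b - b*db = w*w with w = b - yb ∈ I, so φ(b*db) ≤ φ(b*b); rescaling, φ(b*cb) ≤ ‖c‖ φ(b*b)
for self-adjoint c. Taking c = a*a gives ‖π(ab)ξ‖ ≤ ‖a‖ ‖π(b)ξ‖, and finally
‖π(a)ξ‖² = re⟪π(a*a)ξ, ξ⟫ ≤ ‖π(a*a)ξ‖ ‖ξ‖ ≤ ‖a‖ ‖π(a)ξ‖ ‖ξ‖.
-/

open ContinuousLinearMap
open scoped InnerProduct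

theorem ContinuousLinearMap.norm_apply_le_of_norm_adjoint_comp_self_apply_le {𝕜 E F : Type*}
    [RCLike 𝕜] [NormedAddCommGroup E] [InnerProductSpace 𝕜 E] [CompleteSpace E]
    [NormedAddCommGroup F] [InnerProductSpace 𝕜 F] [CompleteSpace F]
    (T : E →L[𝕜] F) {M : ℝ} (hM : 0 ≤ M) (x : E) (h : ‖(T† ∘L T) x‖ ≤ M * ‖T x‖) :
    ‖T x‖ ≤ M * ‖x‖ := by
  have h_sq : ‖T x‖ ^ 2 ≤ M * ‖x‖ * ‖T x‖ :=
    calc ‖T x‖ ^ 2 = RCLike.re (inner 𝕜 ((T† ∘L T) x) x) := T.apply_norm_sq_eq_inner_adjoint_left x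
      _ ≤ ‖(T† ∘L T) x‖ * ‖x‖ := (RCLike.re_le_norm _).trans (norm_inner_le_norm _ _)
      _ ≤ M * ‖T x‖ * ‖x‖ := by gcongr
      _ = M * ‖x‖ * ‖T x‖ := by ring
  nlinarith [norm_nonneg (T x), mul_nonneg hM (norm_nonneg x)]

section StarMap

variable {B : Type*} [Mul B] [Star B] {H : Type*} [NormedAddCommGroup H] [InnerProductSpace ℂ H]
  [CompleteSpace H] {I : Set B} {π : B → H →L[ℂ] H}

theorem map_star_mul_self_eq_adjoint_comp (hI_star : ∀ a ∈ I, star a ∈ I)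
    (hπ_mul : ∀ a ∈ I, ∀ b ∈ I, π (a * b) = π a * π b)
    (hπ_star : ∀ a ∈ I, π (star a) = star (π a)) {a : B} (ha : a ∈ I) :
    π (star a * a) = (π a)† ∘L π a := by
  rw [hπ_mul _ (hI_star a ha) a ha, hπ_star a ha, star_eq_adjoint]
  rfl

end StarMap

section BanachStarAlgebra

variable {B : Type*} [NonUnitalNormedRing B] [StarRing B] [NormedStarGroup B] [CompleteSpace B]
  [NormedSpace ℂ B] [StarModule ℂ B]

theorem IsSelfAdjoint.exists_isSelfAdjoint_add_sub_mul_self_eq {d : B}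
    (hd : IsSelfAdjoint d) (hd_lt : ‖d‖ < 1) :
    ∃ y : B, IsSelfAdjoint y ∧ y + y - y * y = d := by
  let S : Set B := {z | ‖z‖ ≤ ‖d‖ ∧ IsSelfAdjoint z}
  have hS_closed : IsClosed S :=
    (isClosed_le continuous_norm continuous_const).inter (isClosed_eq continuous_star continuous_id)
  have : CompleteSpace S := hS_closed.completeSpace_coe
  have : Nonempty S := ⟨⟨0, by simp, .zero B⟩⟩
  have hS_maps : ∀ z ∈ S, (2⁻¹ : ℂ) • (d + z * z) ∈ S := by
    rintro z ⟨hz_le, hz_sa⟩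
    refine ⟨?_, .smul (by simp [IsSelfAdjoint] : IsSelfAdjoint (2⁻¹ : ℂ)) (hd.add ?_)⟩
    · calc ‖(2⁻¹ : ℂ) • (d + z * z)‖ ≤ 2⁻¹ * (‖d‖ + ‖z‖ * ‖z‖) := by
            rw [norm_smul, norm_inv, Complex.norm_two]
            gcongr
            exact (norm_add_le _ _).trans (by gcongr; exact norm_mul_le _ _)
        _ ≤ ‖d‖ := by nlinarith [norm_nonneg z]
    · simp [IsSelfAdjoint, hz_sa.star_eq]
  let f : S → S := fun z => ⟨(2⁻¹ : ℂ) • (d + z * z), hS_maps z z.2⟩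
  have hf : ContractingWith ⟨‖d‖, norm_nonneg d⟩ f := by
    refine ⟨hd_lt, LipschitzWith.of_dist_le_mul ?_⟩
    rintro ⟨x, hx_le, -⟩ ⟨y, hy_le, -⟩
    have hxy : (2⁻¹ : ℂ) • (d + x * x) - (2⁻¹ : ℂ) • (d + y * y)
        = (2⁻¹ : ℂ) • (x * (x - y) + (x - y) * y) := by
      rw [← smul_sub]; congr 1; noncomm_ring
    simp only [f, Subtype.dist_eq, dist_eq_norm, hxy, norm_smul, norm_inv, Complex.norm_two]
    calc 2⁻¹ * ‖x * (x - y) + (x - y) * y‖ ≤ 2⁻¹ * (‖x‖ * ‖x - y‖ + ‖x - y‖ * ‖y‖) := by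
          gcongr
          exact (norm_add_le _ _).trans (add_le_add (norm_mul_le _ _) (norm_mul_le _ _))
      _ ≤ ‖d‖ * ‖x - y‖ := by nlinarith [norm_nonneg (x - y)]
  obtain ⟨y, hy⟩ : ∃ y, f y = y := ⟨_, hf.fixedPoint_isFixedPt⟩
  refine ⟨y, y.2.2, ?_⟩
  have hy' : (2⁻¹ : ℂ) • (d + y * y) = y := congrArg Subtype.val hy
  have hy_sq : d + y * y = y + y := by
    calc d + y * y = (2 : ℂ) • (2⁻¹ : ℂ) • (d + y * y) := by rw [smul_smul]; norm_num
      _ = y + y := by rw [hy', two_smul]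
  rw [← hy_sq]
  abel

variable {I : Set B} {φ : B → ℝ}

theorem apply_star_mul_mul_le_of_norm_lt_one (hI_sub : ∀ u ∈ I, ∀ v ∈ I, u - v ∈ I)
    (hI_mul : ∀ a : B, ∀ b ∈ I, a * b ∈ I) (hφ_add : ∀ u ∈ I, ∀ v ∈ I, φ (u + v) = φ u + φ v)
    (hφ_nonneg : ∀ w ∈ I, 0 ≤ φ (star w * w)) {b : B} (hb : b ∈ I) {d : B}
    (hd : IsSelfAdjoint d) (hd_lt : ‖d‖ < 1) :
    φ (star b * (d * b)) ≤ φ (star b * b) := by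
  obtain ⟨y, hy, hyd⟩ := hd.exists_isSelfAdjoint_add_sub_mul_self_eq hd_lt
  have hw : b - y * b ∈ I := hI_sub b hb _ (hI_mul y b hb)
  have h_decomp : star (b - y * b) * (b - y * b) + star b * (d * b) = star b * b := by
    rw [star_sub, star_mul, hy.star_eq, ← hyd]
    noncomm_ring
  have h_add := hφ_add (star (b - y * b) * (b - y * b)) (hI_mul _ _ hw)
    (star b * (d * b)) (hI_mul _ _ (hI_mul d b hb))
  rw [h_decomp] at h_add
  linarith [hφ_nonneg _ hw]

variable [IsScalarTower ℂ B B] [SMulCommClass ℂ B B]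

theorem apply_star_mul_mul_le_norm_mul (hI_sub : ∀ u ∈ I, ∀ v ∈ I, u - v ∈ I)
    (hI_mul : ∀ a : B, ∀ b ∈ I, a * b ∈ I) (hφ_add : ∀ u ∈ I, ∀ v ∈ I, φ (u + v) = φ u + φ v)
    (hφ_smul : ∀ r : ℝ, ∀ u ∈ I, φ ((r : ℂ) • u) = r * φ u)
    (hφ_nonneg : ∀ w ∈ I, 0 ≤ φ (star w * w)) {b : B} (hb : b ∈ I) {c : B}
    (hc : IsSelfAdjoint c) :
    φ (star b * (c * b)) ≤ ‖c‖ * φ (star b * b) := by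
  have h_lt : ∀ t > ‖c‖, φ (star b * (c * b)) ≤ t * φ (star b * b) := by
    intro t ht
    have ht₀ : 0 < t := (norm_nonneg c).trans_lt ht
    have h_scaled := apply_star_mul_mul_le_of_norm_lt_one hI_sub hI_mul hφ_add hφ_nonneg hb
      (d := ((t⁻¹ : ℝ) : ℂ) • c) (.smul (by simp [IsSelfAdjoint]) hc) (by
        rw [norm_smul, Complex.norm_real, Real.norm_eq_abs, abs_inv, abs_of_pos ht₀]
        rwa [inv_mul_lt_one₀ ht₀])
    rw [smul_mul_assoc, mul_smul_comm, hφ_smul _ _ (hI_mul _ _ (hI_mul c b hb))] at h_scaled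
    rwa [inv_mul_le_iff₀ ht₀] at h_scaled
  exact ge_of_tendsto (continuous_mul_const _).continuousWithinAt
    (eventually_nhdsWithin_of_forall (s := Set.Ioi ‖c‖) h_lt)

variable {H : Type*} [NormedAddCommGroup H] [InnerProductSpace ℂ H] [CompleteSpace H]
  {π : B → H →L[ℂ] H}

theorem norm_map_mul_apply_le (hI_sub : ∀ u ∈ I, ∀ v ∈ I, u - v ∈ I)
    (hI_mul : ∀ a : B, ∀ b ∈ I, a * b ∈ I) (hI_star : ∀ a ∈ I, star a ∈ I)
    (hπ_add : ∀ a ∈ I, ∀ b ∈ I, π (a + b) = π a + π b)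
    (hπ_smul : ∀ (c : ℂ), ∀ a ∈ I, π (c • a) = c • π a)
    (hπ_mul : ∀ a ∈ I, ∀ b ∈ I, π (a * b) = π a * π b)
    (hπ_star : ∀ a ∈ I, π (star a) = star (π a)) (c : B) {b : B} (hb : b ∈ I) (ξ : H) :
    ‖π (c * b) ξ‖ ≤ ‖c‖ * ‖π b ξ‖ := by
  let φ : B → ℝ := fun x => RCLike.re (inner ℂ (π x ξ) ξ)
  have hφ_star_mul_self : ∀ w ∈ I, φ (star w * w) = ‖π w ξ‖ ^ 2 := fun w hw => by
    simp only [φ, map_star_mul_self_eq_adjoint_comp hI_star hπ_mul hπ_star hw]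
    exact ((π w).apply_norm_sq_eq_inner_adjoint_left ξ).symm
  have hφ_add : ∀ u ∈ I, ∀ v ∈ I, φ (u + v) = φ u + φ v := fun u hu v hv => by
    simp only [φ, hπ_add u hu v hv, add_apply, inner_add_left, map_add]
  have hφ_smul : ∀ r : ℝ, ∀ u ∈ I, φ ((r : ℂ) • u) = r * φ u := fun r u hu => by
    simp only [φ, hπ_smul _ u hu, smul_apply, inner_smul_left, Complex.conj_ofReal,
      RCLike.re_to_complex, Complex.re_ofReal_mul]
  have h_le := apply_star_mul_mul_le_norm_mul hI_sub hI_mul hφ_add hφ_smul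
    (fun w hw => hφ_star_mul_self w hw ▸ sq_nonneg _) hb (IsSelfAdjoint.star_mul_self c)
  have h_sq : ‖π (c * b) ξ‖ ^ 2 ≤ (‖c‖ * ‖π b ξ‖) ^ 2 :=
    calc ‖π (c * b) ξ‖ ^ 2 = φ (star b * ((star c * c) * b)) := by
          rw [← hφ_star_mul_self _ (hI_mul c b hb)]
          simp only [star_mul, mul_assoc]
      _ ≤ ‖star c * c‖ * ‖π b ξ‖ ^ 2 := hφ_star_mul_self b hb ▸ h_le
      _ ≤ ‖c‖ ^ 2 * ‖π b ξ‖ ^ 2 := by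
          gcongr
          exact (norm_mul_le _ _).trans (by rw [norm_star, sq])
      _ = (‖c‖ * ‖π b ξ‖) ^ 2 := by ring
  exact (sq_le_sq₀ (norm_nonneg _) (by positivity)).mp h_sq

end BanachStarAlgebra

/-- If `B` is a Banach *-algebra, `I ⊆ B` a (not necessarily closed)
two-sided *-ideal, and `π` a *-homomorphism from `I` into the bounded operators on a
Hilbert space `H`, then `π` is contractive for the norm inherited from `B`. -/
theorem star_hom_on_ideal_contractive
    {B : Type} [NonUnitalNormedRing B] [StarRing B] [NormedStarGroup B]
    [CompleteSpace B] [NormedSpace ℂ B] [IsScalarTower ℂ B B] [SMulCommClass ℂ B B]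
    [StarModule ℂ B]
    {H : Type} [NormedAddCommGroup H] [InnerProductSpace ℂ H] [CompleteSpace H]
    (I : Set B)
    (hIadd : ∀ a ∈ I, ∀ b ∈ I, a + b ∈ I)
    (hIsmul : ∀ (c : ℂ), ∀ a ∈ I, c • a ∈ I)
    (hIstar : ∀ a ∈ I, star a ∈ I)
    (hIideal : ∀ a ∈ I, ∀ b : B, a * b ∈ I ∧ b * a ∈ I)
    (π : B → H →L[ℂ] H)
    (hπadd : ∀ a ∈ I, ∀ b ∈ I, π (a + b) = π a + π b)
    (hπsmul : ∀ (c : ℂ), ∀ a ∈ I, π (c • a) = c • π a)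
    (hπmul : ∀ a ∈ I, ∀ b ∈ I, π (a * b) = π a * π b)
    (hπstar : ∀ a ∈ I, π (star a) = star (π a)) :
    ∀ a ∈ I, ‖π a‖ ≤ ‖a‖ := by
  have hI_sub : ∀ u ∈ I, ∀ v ∈ I, u - v ∈ I := fun u hu v hv => by
    simpa [sub_eq_add_neg] using hIadd u hu _ (hIsmul (-1) v hv)
  have hI_mul : ∀ c : B, ∀ b ∈ I, c * b ∈ I := fun c b hb => (hIideal b hb c).2
  intro a ha
  refine ContinuousLinearMap.opNorm_le_bound _ (norm_nonneg a) fun ξ => ?_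
  refine (π a).norm_apply_le_of_norm_adjoint_comp_self_apply_le (norm_nonneg a) ξ ?_
  rw [← map_star_mul_self_eq_adjoint_comp hIstar hπmul hπstar ha, ← norm_star a]
  exact norm_map_mul_apply_le hI_sub hI_mul hIstar hπadd hπsmul hπmul hπstar (star a) ha ξ
end

section
/- Let B be a Banach *-algebra with a two-sided *-ideal I, and let π : I → B(H) be a nondegenerate *-representation (meaning the closed span of π(I)H equals H). Then π admits a unique extension to a *-representation π' : B → B(H). -/
/-!
A *-homomorphism `π` defined on a *-ideal `I` is automatically contractive: for self-adjoint
`h ∈ I` the norm of `π h` is its spectral radius, and every spectral value of `π h` lies in the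
quasispectrum of `h` (the quasi-inverse of an element of an ideal stays in the ideal), hence in the
disc of radius `‖h‖`.

For `b ∈ B` and a finite family `(aᵢ, ξᵢ)` in `I × H` put `W x = ∑ π (x aᵢ) ξᵢ` and
`V = ∑ π aᵢ ξᵢ`. Then `‖W x‖² = ⟪V, W (x⋆x)⟫ ≤ ‖V‖ ‖W (x⋆x)‖`, and iterating `x ↦ x⋆x`
against the crude bound `‖W x‖ ≤ C ‖x‖` yields `‖W b‖ ≤ ‖b‖ ‖V‖`. So `V ↦ W b` is a well defined
bounded operator on the dense subspace spanned by `π(I)H`, and it extends to `H`; any extension of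
`π` must act this way on `π(I)H`, which gives uniqueness.
-/

open scoped InnerProductSpace

theorem le_of_forall_pow_two_pow_le_mul {a b c : ℝ} (hb : 0 ≤ b)
    (h : ∀ n : ℕ, a ^ 2 ^ n ≤ c * b ^ 2 ^ n) : a ≤ b := by
  by_contra! hba
  have ha : 0 < a := hb.trans_lt hba
  rcases hb.eq_or_lt with rfl | hb
  · simpa [ha.not_ge] using h 0
  obtain ⟨n, hn⟩ := pow_unbounded_of_one_lt c ((one_lt_div hb).2 hba)
  have hle : (a / b) ^ 2 ^ n ≤ c := by
    rw [div_pow, div_le_iff₀ (by positivity)]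
    exact h n
  have hmono : (a / b) ^ n ≤ (a / b) ^ 2 ^ n :=
    pow_le_pow_right₀ ((one_lt_div hb).2 hba).le n.lt_two_pow_self.le
  linarith

theorem le_norm_of_sq_le_comp_star_mul {B : Type*} [NonUnitalNormedRing B] [StarRing B]
    [NormedStarGroup B] (g : B → ℝ) {C : ℝ} (hC : ∀ x, g x ≤ C * ‖x‖)
    (hsq : ∀ x, g x ^ 2 ≤ g (star x * x)) (b : B) : g b ≤ ‖b‖ := by
  rcases lt_or_ge (g b) 0 with hneg | hb
  · linarith [norm_nonneg b]
  set q : ℕ → B := fun n => (fun x => star x * x)^[n] b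
  have hq_succ (n : ℕ) : q (n + 1) = star (q n) * q n := Function.iterate_succ_apply' _ n b
  have hg_q (n : ℕ) : g b ^ 2 ^ n ≤ g (q n) := by
    induction n with
    | zero => simp [q]
    | succ n ih =>
      calc g b ^ 2 ^ (n + 1) = (g b ^ 2 ^ n) ^ 2 := by rw [pow_succ, pow_mul]
        _ ≤ g (q n) ^ 2 := pow_le_pow_left₀ (by positivity) ih 2
        _ ≤ g (q (n + 1)) := hq_succ n ▸ hsq (q n)
  have hnorm_q (n : ℕ) : ‖q n‖ ≤ ‖b‖ ^ 2 ^ n := by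
    induction n with
    | zero => simp [q]
    | succ n ih =>
      calc ‖q (n + 1)‖ ≤ ‖q n‖ ^ 2 := by
            rw [hq_succ, sq]
            exact (norm_mul_le _ _).trans_eq (by rw [norm_star])
        _ ≤ (‖b‖ ^ 2 ^ n) ^ 2 := pow_le_pow_left₀ (norm_nonneg _) ih 2
        _ = ‖b‖ ^ 2 ^ (n + 1) := by rw [← pow_mul, ← pow_succ]
  refine le_of_forall_pow_two_pow_le_mul (c := |C|) (norm_nonneg b) fun n => ?_
  calc g b ^ 2 ^ n ≤ C * ‖q n‖ := (hg_q n).trans (hC _)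
    _ ≤ |C| * ‖q n‖ := mul_le_mul_of_nonneg_right (le_abs_self C) (norm_nonneg _)
    _ ≤ |C| * ‖b‖ ^ 2 ^ n := mul_le_mul_of_nonneg_left (hnorm_q n) (abs_nonneg C)

theorem le_mul_norm_of_sq_le_mul_comp_star_mul {B : Type*} [NonUnitalNormedRing B] [StarRing B]
    [NormedStarGroup B] (g : B → ℝ) {C K : ℝ} (hK : 0 ≤ K) (hC : ∀ x, g x ≤ C * ‖x‖)
    (hsq : ∀ x, g x ^ 2 ≤ K * g (star x * x)) (b : B) : g b ≤ K * ‖b‖ := by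
  rcases hK.eq_or_lt with rfl | hK
  · nlinarith [hsq b, sq_nonneg (g b)]
  rw [← div_le_iff₀' hK]
  refine le_norm_of_sq_le_comp_star_mul (fun x => g x / K) (C := C / K) (fun x => ?_)
    (fun x => ?_) b
  · rw [div_mul_eq_mul_div]; exact div_le_div_of_nonneg_right (hC x) hK.le
  · rw [div_pow, div_le_div_iff₀ (by positivity) hK]; nlinarith [hsq x]

theorem quasispectrum_subset_closedBall_norm {𝕜 A : Type*} [NormedField 𝕜] [CompleteSpace 𝕜]
    [NonUnitalNormedRing A] [NormedSpace 𝕜 A] [IsScalarTower 𝕜 A A] [SMulCommClass 𝕜 A A]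
    [CompleteSpace A] (a : A) : quasispectrum 𝕜 a ⊆ Metric.closedBall 0 ‖a‖ := by
  -- `A` sits isometrically in its `ℓ¹` unitization, which is a Banach algebra
  rw [Unitization.quasispectrum_eq_spectrum_inr' 𝕜 𝕜,
    ← AlgEquiv.spectrum_eq (WithLp.unitizationAlgEquiv 𝕜).symm (a : Unitization 𝕜 A)]
  intro k hk
  have := spectrum.norm_le_norm_mul_of_mem hk
  have hone : ‖(1 : WithLp 1 (Unitization 𝕜 A))‖ = 1 := by
    rw [WithLp.unitization_norm_def]
    change ‖(1 : 𝕜)‖ + ‖(0 : A)‖ = 1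
    simp
  have hinr : ‖(WithLp.unitizationAlgEquiv 𝕜).symm (a : Unitization 𝕜 A)‖ = ‖a‖ :=
    WithLp.unitization_norm_inr a
  simpa [hone, hinr] using this

theorem inner_linearCombination_eq_of_inner_eq {𝕜 ι E : Type*} [RCLike 𝕜] [NormedAddCommGroup E]
    [InnerProductSpace 𝕜 E] {v w v' w' : ι → E} (h : ∀ i j, ⟪v i, w j⟫_𝕜 = ⟪v' i, w' j⟫_𝕜)
    (f g : ι →₀ 𝕜) :
    ⟪Finsupp.linearCombination 𝕜 v f, Finsupp.linearCombination 𝕜 w g⟫_𝕜 =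
      ⟪Finsupp.linearCombination 𝕜 v' f, Finsupp.linearCombination 𝕜 w' g⟫_𝕜 := by
  simp only [Finsupp.linearCombination_apply, Finsupp.sum, sum_inner, inner_sum, inner_smul_left,
    inner_smul_right, h]

structure IsStarRepOfIdeal {B E : Type*} [Add B] [Mul B] [SMul ℂ B] [Star B]
    [Add E] [Mul E] [SMul ℂ E] [Star E] (I : Set B) (π : B → E) : Prop where
  add_mem : ∀ a ∈ I, ∀ b ∈ I, a + b ∈ I
  smul_mem : ∀ (c : ℂ), ∀ a ∈ I, c • a ∈ I
  star_mem : ∀ a ∈ I, star a ∈ I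
  mul_mem : ∀ a ∈ I, ∀ b : B, a * b ∈ I ∧ b * a ∈ I
  map_add : ∀ a ∈ I, ∀ b ∈ I, π (a + b) = π a + π b
  map_smul : ∀ (c : ℂ), ∀ a ∈ I, π (c • a) = c • π a
  map_mul : ∀ a ∈ I, ∀ b ∈ I, π (a * b) = π a * π b
  map_star : ∀ a ∈ I, π (star a) = star (π a)

namespace IsStarRepOfIdeal

section Quasispectrum

variable {B E : Type*} [NonUnitalRing B] [Module ℂ B] [Star B] [NonUnitalRing E] [Module ℂ E]
  [Star E] {I : Set B} {π : B → E}

theorem neg_mem (hπ : IsStarRepOfIdeal I π) {a : B} (ha : a ∈ I) : -a ∈ I := by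
  simpa using hπ.smul_mem (-1) a ha

theorem map_neg (hπ : IsStarRepOfIdeal I π) {a : B} (ha : a ∈ I) : π (-a) = -π a := by
  simpa using hπ.map_smul (-1) a ha

theorem map_add_add_mul_eq_zero (hπ : IsStarRepOfIdeal I π) {a b : B} (ha : a ∈ I) (hb : b ∈ I)
    (h : a + b + b * a = 0) : π a + π b + π b * π a = 0 := by
  have hba : b * a ∈ I := (hπ.mul_mem b hb a).1
  rw [add_assoc, ← eq_neg_iff_add_eq_zero, ← hπ.map_mul b hb a ha, ← hπ.map_add b hb _ hba,
    ← hπ.map_neg (hπ.add_mem b hb _ hba)]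
  rw [add_assoc] at h
  exact congrArg π (eq_neg_of_add_eq_zero_left h)

theorem isQuasiregular_apply (hπ : IsStarRepOfIdeal I π) {a : B} (ha : a ∈ I)
    (h : IsQuasiregular a) : IsQuasiregular (π a) := by
  obtain ⟨b, h₁, h₂⟩ := isQuasiregular_iff.mp h
  have hb : b ∈ I := by
    rw [add_assoc] at h₁
    rw [eq_neg_of_add_eq_zero_left h₁]
    exact hπ.neg_mem (hπ.add_mem a ha _ (hπ.mul_mem a ha b).1)
  exact isQuasiregular_iff.mpr
    ⟨π b, hπ.map_add_add_mul_eq_zero hb ha h₁, hπ.map_add_add_mul_eq_zero ha hb h₂⟩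

theorem quasispectrum_apply_subset (hπ : IsStarRepOfIdeal I π) {a : B} (ha : a ∈ I) :
    quasispectrum ℂ (π a) ⊆ quasispectrum ℂ a := by
  intro r hr hunit hreg
  rw [Units.smul_def] at hreg
  have hmem : (↑hunit.unit⁻¹ : ℂ) • a ∈ I := hπ.smul_mem _ a ha
  have := hπ.isQuasiregular_apply (hπ.neg_mem hmem) hreg
  rw [hπ.map_neg hmem, hπ.map_smul _ a ha, ← Units.smul_def] at this
  exact hr hunit this

end Quasispectrum

section Contractive

variable {B E : Type*} [NonUnitalNormedRing B] [StarRing B] [NormedSpace ℂ B]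
  [IsScalarTower ℂ B B] [SMulCommClass ℂ B B] [CompleteSpace B] [CStarAlgebra E]
  {I : Set B} {π : B → E}

theorem norm_apply_le_of_isSelfAdjoint (hπ : IsStarRepOfIdeal I π) {h : B} (hh : h ∈ I)
    (hsa : IsSelfAdjoint h) : ‖π h‖ ≤ ‖h‖ := by
  have hsa' : IsSelfAdjoint (π h) := by rw [IsSelfAdjoint, ← hπ.map_star h hh, hsa.star_eq]
  have hrad : spectralRadius ℂ (π h) ≤ ‖h‖₊ := by
    refine iSup₂_le fun k hk => ?_
    have := quasispectrum_subset_closedBall_norm h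
      (hπ.quasispectrum_apply_subset hh (spectrum_subset_quasispectrum ℂ _ hk))
    exact_mod_cast mem_closedBall_zero_iff.mp this
  rw [hsa'.spectralRadius_eq_nnnorm] at hrad
  exact_mod_cast hrad

theorem norm_apply_le [NormedStarGroup B] (hπ : IsStarRepOfIdeal I π) {a : B} (ha : a ∈ I) :
    ‖π a‖ ≤ ‖a‖ := by
  have hstar : star a ∈ I := hπ.star_mem a ha
  refine (mul_self_le_mul_self_iff (norm_nonneg _) (norm_nonneg _)).mpr ?_
  calc ‖π a‖ * ‖π a‖ = ‖π (star a * a)‖ := by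
        rw [hπ.map_mul _ hstar a ha, hπ.map_star a ha, CStarRing.norm_star_mul_self]
    _ ≤ ‖star a * a‖ :=
        hπ.norm_apply_le_of_isSelfAdjoint (hπ.mul_mem _ hstar a).1 (.star_mul_self a)
    _ ≤ ‖a‖ * ‖a‖ := (norm_mul_le _ _).trans_eq (by rw [norm_star])

end Contractive

section Hilbert

variable {B H : Type*} [NormedAddCommGroup H] [InnerProductSpace ℂ H]

variable (I : Set B) (π : B → H →L[ℂ] H) in
noncomputable def applyCombination : (I × H →₀ ℂ) →ₗ[ℂ] H :=
  Finsupp.linearCombination ℂ fun p => π p.1 p.2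

theorem denseRange_applyCombination_iff {I : Set B} {π : B → H →L[ℂ] H} :
    DenseRange (applyCombination I π) ↔
      Dense (Submodule.span ℂ (Set.range fun p : I × H => π p.1 p.2) : Set H) := by
  rw [DenseRange, ← LinearMap.coe_range, applyCombination, Finsupp.range_linearCombination]

theorem eq_of_forall_inner_apply_eq {I : Set B} {π : B → H →L[ℂ] H}
    (hdense : DenseRange (applyCombination I π)) {u v : H}
    (h : ∀ a ∈ I, ∀ ξ : H, ⟪u, π a ξ⟫_ℂ = ⟪v, π a ξ⟫_ℂ) : u = v := by
  have : innerSL ℂ u = innerSL ℂ v :=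
    ContinuousLinearMap.ext_on (denseRange_applyCombination_iff.mp hdense) <| by
      rintro _ ⟨⟨⟨a, ha⟩, ξ⟩, rfl⟩
      exact h a ha ξ
  exact ext_inner_right ℂ fun w => congr($this w)

variable [CompleteSpace H]

theorem inner_apply_apply [NonUnitalRing B] [StarRing B] [Module ℂ B] {I : Set B}
    {π : B → H →L[ℂ] H} (hπ : IsStarRepOfIdeal I π) {a d : B} (ha : a ∈ I) (hd : d ∈ I)
    (ξ η : H) : ⟪π a ξ, π d η⟫_ℂ = ⟪ξ, π (star a * d) η⟫_ℂ := by
  rw [hπ.map_mul _ (hπ.star_mem a ha) d hd, hπ.map_star a ha, mul_apply_eq_comp,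
    ContinuousLinearMap.star_eq_adjoint, ContinuousLinearMap.adjoint_inner_right]

theorem inner_apply_mul_apply_mul [NonUnitalRing B] [StarRing B] [Module ℂ B] {I : Set B}
    {π : B → H →L[ℂ] H} (hπ : IsStarRepOfIdeal I π) (x y : B) {a d : B} (ha : a ∈ I)
    (hd : d ∈ I) (ξ η : H) :
    ⟪π (x * a) ξ, π (y * d) η⟫_ℂ = ⟪π a ξ, π (star x * y * d) η⟫_ℂ := by
  rw [hπ.inner_apply_apply (hπ.mul_mem a ha x).2 (hπ.mul_mem d hd y).2,
    hπ.inner_apply_apply ha (hπ.mul_mem d hd _).2, star_mul, mul_assoc, mul_assoc]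

variable [NonUnitalNormedRing B] [StarRing B] [NormedStarGroup B] [NormedSpace ℂ B]
  [IsScalarTower ℂ B B] [SMulCommClass ℂ B B] [CompleteSpace B] {I : Set B} {π : B → H →L[ℂ] H}

theorem exists_norm_applyCombination_mul_le (hπ : IsStarRepOfIdeal I π) (f : I × H →₀ ℂ) :
    ∃ C, ∀ x : B, ‖applyCombination I (fun a => π (x * a)) f‖ ≤ C * ‖x‖ := by
  refine ⟨∑ p ∈ f.support, ‖f p‖ * (‖(p.1 : B)‖ * ‖p.2‖), fun x => ?_⟩
  rw [applyCombination, Finsupp.linearCombination_apply, Finsupp.sum, Finset.sum_mul]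
  refine (norm_sum_le _ _).trans (Finset.sum_le_sum fun p _ => ?_)
  have hmem : x * p.1 ∈ I := (hπ.mul_mem p.1 p.1.2 x).2
  calc ‖f p • π (x * p.1) p.2‖ ≤ ‖f p‖ * (‖x * p.1‖ * ‖p.2‖) := by
        rw [norm_smul]
        exact mul_le_mul_of_nonneg_left
          (((π _).le_opNorm _).trans (mul_le_mul_of_nonneg_right (hπ.norm_apply_le hmem)
            (norm_nonneg _))) (norm_nonneg _)
    _ ≤ ‖f p‖ * (‖x‖ * ‖(p.1 : B)‖ * ‖p.2‖) := by gcongr; exact norm_mul_le _ _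
    _ = ‖f p‖ * (‖(p.1 : B)‖ * ‖p.2‖) * ‖x‖ := by ring

theorem norm_applyCombination_mul_le (hπ : IsStarRepOfIdeal I π) (b : B) (f : I × H →₀ ℂ) :
    ‖applyCombination I (fun a => π (b * a)) f‖ ≤ ‖b‖ * ‖applyCombination I π f‖ := by
  obtain ⟨C, hC⟩ := hπ.exists_norm_applyCombination_mul_le f
  refine (le_mul_norm_of_sq_le_mul_comp_star_mul _ (norm_nonneg _) hC (fun x => ?_) b).trans_eq
    (mul_comm _ _)
  have hinner : ⟪applyCombination I (fun a => π (x * a)) f,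
      applyCombination I (fun a => π (x * a)) f⟫_ℂ =
      ⟪applyCombination I π f, applyCombination I (fun a => π (star x * x * a)) f⟫_ℂ :=
    inner_linearCombination_eq_of_inner_eq
      (fun p q => hπ.inner_apply_mul_apply_mul x x p.1.2 q.1.2 p.2 q.2) f f
  calc ‖applyCombination I (fun a => π (x * a)) f‖ ^ 2
      = ‖⟪applyCombination I (fun a => π (x * a)) f,
          applyCombination I (fun a => π (x * a)) f⟫_ℂ‖ := by
        simp [inner_self_eq_norm_sq_to_K]
    _ ≤ _ := hinner ▸ norm_inner_le_norm _ _

variable (I π) in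
noncomputable def extension (b : B) : H →L[ℂ] H :=
  (applyCombination I fun a => π (b * a)).extendOfNorm (applyCombination I π)

theorem extension_apply_apply (hπ : IsStarRepOfIdeal I π)
    (hdense : DenseRange (applyCombination I π)) (b : B) {a : B} (ha : a ∈ I) (ξ : H) :
    extension I π b (π a ξ) = π (b * a) ξ := by
  simpa [extension, applyCombination] using LinearMap.extendOfNorm_eq hdense
    ⟨‖b‖, hπ.norm_applyCombination_mul_le b⟩ (Finsupp.single (⟨a, ha⟩, ξ) 1)

theorem eq_extension (hπ : IsStarRepOfIdeal I π) (hdense : DenseRange (applyCombination I π))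
    {b : B} {T : H →L[ℂ] H} (hT : ∀ a ∈ I, ∀ ξ : H, T (π a ξ) = π (b * a) ξ) :
    T = extension I π b :=
  ContinuousLinearMap.ext_on (denseRange_applyCombination_iff.mp hdense) <| by
    rintro _ ⟨⟨⟨a, ha⟩, ξ⟩, rfl⟩
    exact (hT a ha ξ).trans (hπ.extension_apply_apply hdense b ha ξ).symm

theorem extension_add (hπ : IsStarRepOfIdeal I π) (hdense : DenseRange (applyCombination I π))
    (b₁ b₂ : B) : extension I π (b₁ + b₂) = extension I π b₁ + extension I π b₂ := by
  refine (hπ.eq_extension hdense fun a ha ξ => ?_).symm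
  rw [add_apply, hπ.extension_apply_apply hdense b₁ ha, hπ.extension_apply_apply hdense b₂ ha,
    add_mul, hπ.map_add _ (hπ.mul_mem a ha b₁).2 _ (hπ.mul_mem a ha b₂).2, add_apply]

theorem extension_smul (hπ : IsStarRepOfIdeal I π) (hdense : DenseRange (applyCombination I π))
    (c : ℂ) (b : B) : extension I π (c • b) = c • extension I π b := by
  refine (hπ.eq_extension hdense fun a ha ξ => ?_).symm
  rw [smul_apply, hπ.extension_apply_apply hdense b ha, smul_mul_assoc,
    hπ.map_smul _ _ (hπ.mul_mem a ha b).2, smul_apply]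

theorem extension_mul (hπ : IsStarRepOfIdeal I π) (hdense : DenseRange (applyCombination I π))
    (b₁ b₂ : B) : extension I π (b₁ * b₂) = extension I π b₁ * extension I π b₂ := by
  refine (hπ.eq_extension hdense fun a ha ξ => ?_).symm
  rw [mul_apply_eq_comp, hπ.extension_apply_apply hdense b₂ ha,
    hπ.extension_apply_apply hdense b₁ (hπ.mul_mem a ha b₂).2, mul_assoc]

theorem extension_star (hπ : IsStarRepOfIdeal I π) (hdense : DenseRange (applyCombination I π))
    (b : B) : extension I π (star b) = star (extension I π b) := by
  refine (hπ.eq_extension hdense fun a ha ξ => eq_of_forall_inner_apply_eq hdense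
    fun c hc η => ?_).symm
  rw [ContinuousLinearMap.star_eq_adjoint, ContinuousLinearMap.adjoint_inner_left,
    hπ.extension_apply_apply hdense b hc, hπ.inner_apply_apply ha (hπ.mul_mem c hc b).2,
    hπ.inner_apply_apply (hπ.mul_mem a ha _).2 hc, star_mul, star_star, mul_assoc]

theorem extension_of_mem (hπ : IsStarRepOfIdeal I π) (hdense : DenseRange (applyCombination I π))
    {a : B} (ha : a ∈ I) : extension I π a = π a :=
  (hπ.eq_extension hdense fun a' ha' ξ => by rw [hπ.map_mul a ha a' ha', mul_apply_eq_comp]).symm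

end Hilbert

end IsStarRepOfIdeal

theorem nondegenerate_rep_of_ideal_extends_uniquely_general
    {B : Type} [NonUnitalNormedRing B] [StarRing B] [NormedStarGroup B]
    [CompleteSpace B] [NormedSpace ℂ B] [IsScalarTower ℂ B B] [SMulCommClass ℂ B B]
    {H : Type} [NormedAddCommGroup H] [InnerProductSpace ℂ H] [CompleteSpace H]
    (I : Set B)
    (hIadd : ∀ a ∈ I, ∀ b ∈ I, a + b ∈ I)
    (hIsmul : ∀ (c : ℂ), ∀ a ∈ I, c • a ∈ I)
    (hIstar : ∀ a ∈ I, star a ∈ I)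
    (hIideal : ∀ a ∈ I, ∀ b : B, a * b ∈ I ∧ b * a ∈ I)
    (π : B → H →L[ℂ] H)
    (hπadd : ∀ a ∈ I, ∀ b ∈ I, π (a + b) = π a + π b)
    (hπsmul : ∀ (c : ℂ), ∀ a ∈ I, π (c • a) = c • π a)
    (hπmul : ∀ a ∈ I, ∀ b ∈ I, π (a * b) = π a * π b)
    (hπstar : ∀ a ∈ I, π (star a) = star (π a))
    (hnondeg :
      (Submodule.span ℂ {x : H | ∃ a ∈ I, ∃ ξ : H, (π a) ξ = x}).topologicalClosure = ⊤) :
    ∃! π' : B → H →L[ℂ] H,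
      (∀ a b : B, π' (a + b) = π' a + π' b) ∧
      (∀ (c : ℂ) (a : B), π' (c • a) = c • π' a) ∧
      (∀ a b : B, π' (a * b) = π' a * π' b) ∧
      (∀ a : B, π' (star a) = star (π' a)) ∧
      (∀ a ∈ I, π' a = π a) := by
  have hπ : IsStarRepOfIdeal I π :=
    ⟨hIadd, hIsmul, hIstar, hIideal, hπadd, hπsmul, hπmul, hπstar⟩
  have hdense : DenseRange (IsStarRepOfIdeal.applyCombination I π) := by
    have hrange : {x : H | ∃ a ∈ I, ∃ ξ : H, π a ξ = x} = Set.range fun p : I × H => π p.1 p.2 := by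
      ext; simp
    rw [IsStarRepOfIdeal.denseRange_applyCombination_iff, ← hrange]
    exact Submodule.dense_iff_topologicalClosure_eq_top.mpr hnondeg
  refine ⟨IsStarRepOfIdeal.extension I π, ⟨hπ.extension_add hdense, hπ.extension_smul hdense,
    hπ.extension_mul hdense, hπ.extension_star hdense, fun a ha => hπ.extension_of_mem hdense ha⟩,
    ?_⟩
  rintro π' ⟨-, -, hmul, -, hres⟩
  funext b
  refine hπ.eq_extension hdense fun a ha ξ => ?_
  rw [← hres a ha, ← mul_apply_eq_comp, ← hmul, hres _ (hIideal a ha b).2]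

/-- A nondegenerate *-representation `π` of a two-sided *-ideal `I` of a
Banach *-algebra `B` on a Hilbert space extends uniquely to a *-representation of `B`. -/
theorem nondegenerate_rep_of_ideal_extends_uniquely
    {B : Type} [NonUnitalNormedRing B] [StarRing B] [NormedStarGroup B]
    [CompleteSpace B] [NormedSpace ℂ B] [IsScalarTower ℂ B B] [SMulCommClass ℂ B B]
    [StarModule ℂ B]
    {H : Type} [NormedAddCommGroup H] [InnerProductSpace ℂ H] [CompleteSpace H]
    (I : Set B)
    (hIadd : ∀ a ∈ I, ∀ b ∈ I, a + b ∈ I)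
    (hIsmul : ∀ (c : ℂ), ∀ a ∈ I, c • a ∈ I)
    (hIstar : ∀ a ∈ I, star a ∈ I)
    (hIideal : ∀ a ∈ I, ∀ b : B, a * b ∈ I ∧ b * a ∈ I)
    (π : B → H →L[ℂ] H)
    (hπadd : ∀ a ∈ I, ∀ b ∈ I, π (a + b) = π a + π b)
    (hπsmul : ∀ (c : ℂ), ∀ a ∈ I, π (c • a) = c • π a)
    (hπmul : ∀ a ∈ I, ∀ b ∈ I, π (a * b) = π a * π b)
    (hπstar : ∀ a ∈ I, π (star a) = star (π a))
    (hnondeg :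
      (Submodule.span ℂ {x : H | ∃ a ∈ I, ∃ ξ : H, (π a) ξ = x}).topologicalClosure = ⊤) :
    ∃! π' : B → H →L[ℂ] H,
      (∀ a b : B, π' (a + b) = π' a + π' b) ∧
      (∀ (c : ℂ) (a : B), π' (c • a) = c • π' a) ∧
      (∀ a b : B, π' (a * b) = π' a * π' b) ∧
      (∀ a : B, π' (star a) = star (π' a)) ∧
      (∀ a ∈ I, π' a = π a) :=
  nondegenerate_rep_of_ideal_extends_uniquely_general I hIadd hIsmul hIstar hIideal π hπadd hπsmul
    hπmul hπstar hnondeg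
end

section
/- Let G be a group, H ≤ G a subgroup, α ∈ G/H a coset, and B = {B_t}_{t∈G} a Fell bundle over G. Fix t₁,…,t_n ∈ α and set M_𝔱(B) := { (M_{ij}) : M_{ij} ∈ B_{t_i⁻¹ t_j} }, with matrix multiplication and *-transpose involution. Then M_𝔱(B) is a C*-algebra, and for any b₁,…,b_n with b_j ∈ B_{t_j}, the matrix M := (b_i* b_j)_{i,j} is a positive element of M_𝔱(B). -/
/-!
The matrix `(b_i* b_j)` equals `Rᴴ R` for the matrix `R` whose only nonzero row is `(b_j)`, so it
is positive in the C⋆-algebra `CStarMatrix (Fin n) (Fin n) A`. The matrices whose `(i, j)` entry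
lies in `B_{t_i⁻¹ t_j}` form a ⋆-subalgebra of it, closed because the fibres are, and the
continuous functional calculus never leaves a closed ⋆-subalgebra. Hence `N = √M` is a
self-adjoint element of `M_𝔱(B)` with `M = N* N`.
-/

open scoped Matrix

section FiberMatrices

variable {G : Type*} [Group G] {ι : Type*} {R A : Type*}

/-- The paper's `M_𝔱(B)`. -/
def fiberMatrices [Semiring R] [AddCommMonoid A] [Module R A] (B : G → Submodule R A)
    (t : ι → G) : Set (Matrix ι ι A) :=
  {M | ∀ i j, M i j ∈ B ((t i)⁻¹ * t j)}

variable [Semiring R] [NonUnitalNonAssocSemiring A] [Module R A] {B : G → Submodule R A}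
  {t : ι → G}

theorem mul_mem_fiberMatrices [Fintype ι]
    (hmul : ∀ {s t : G} {a b : A}, a ∈ B s → b ∈ B t → a * b ∈ B (s * t))
    {M N : Matrix ι ι A} (hM : M ∈ fiberMatrices B t) (hN : N ∈ fiberMatrices B t) :
    M * N ∈ fiberMatrices B t := fun i j =>
  Submodule.sum_mem _ fun k _ => by
    simpa [mul_assoc] using hmul (hM i k) (hN k j)

theorem conjTranspose_mem_fiberMatrices [Star A]
    (hstar : ∀ {t : G} {a : A}, a ∈ B t → star a ∈ B t⁻¹)
    {M : Matrix ι ι A} (hM : M ∈ fiberMatrices B t) : Mᴴ ∈ fiberMatrices B t := fun i j => by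
  simpa using hstar (hM j i)

theorem isClosed_fiberMatrices [TopologicalSpace A] (hclosed : ∀ s, IsClosed (B s : Set A)) :
    IsClosed (fiberMatrices B t) := by
  simp only [fiberMatrices, Set.ofPred_forall]
  exact isClosed_iInter fun i => isClosed_iInter fun j =>
    (hclosed _).preimage ((continuous_apply j).comp (continuous_apply i))

end FiberMatrices

def fiberMatrixSubalgebra {G ι R A : Type*} [Group G] [Fintype ι] [CommSemiring R] [StarRing R]
    [NonUnitalSemiring A] [StarRing A] [Module R A] [StarModule R A] (B : G → Submodule R A)
    (hmul : ∀ {s t : G} {a b : A}, a ∈ B s → b ∈ B t → a * b ∈ B (s * t))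
    (hstar : ∀ {t : G} {a : A}, a ∈ B t → star a ∈ B t⁻¹) (t : ι → G) :
    NonUnitalStarSubalgebra R (CStarMatrix ι ι A) where
  carrier := fiberMatrices B t
  zero_mem' _ _ := zero_mem _
  add_mem' hM hN i j := add_mem (hM i j) (hN i j)
  mul_mem' hM hN := mul_mem_fiberMatrices hmul hM hN
  smul_mem' c _ hM i j := Submodule.smul_mem _ c (hM i j)
  star_mem' hM := conjTranspose_mem_fiberMatrices (B := B) hstar hM

theorem NonUnitalStarSubalgebra.exists_isSelfAdjoint_star_mul_self_eq {A : Type*}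
    [NonUnitalCStarAlgebra A] [PartialOrder A] [StarOrderedRing A]
    {S : NonUnitalStarSubalgebra ℂ A} (hS : IsClosed (S : Set A)) {a : A} (ha : 0 ≤ a)
    (haS : a ∈ S) : ∃ x ∈ S, IsSelfAdjoint x ∧ star x * x = a := by
  have hsa : IsSelfAdjoint (CFC.sqrt a) := (CFC.sqrt_nonneg a).isSelfAdjoint
  refine ⟨CFC.sqrt a, ?_, hsa, by rw [hsa.star_eq, CFC.sqrt_mul_sqrt_self a ha]⟩
  rw [CFC.sqrt_eq_real_sqrt a ha]
  exact cfcₙ_mem (hs := hS) Real.sqrt haS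

theorem CStarMatrix.ofMatrix_star_mul_nonneg {ι A : Type*} [Fintype ι] [NonUnitalCStarAlgebra A]
    [PartialOrder A] [StarOrderedRing A] (b : ι → A) :
    0 ≤ CStarMatrix.ofMatrix (Matrix.of fun i j => star (b i) * b j) := by
  classical
  cases isEmpty_or_nonempty ι with
  | inl _ => exact (CStarMatrix.ext fun i => isEmptyElim i).ge
  | inr h =>
    obtain ⟨i₀⟩ := h
    convert star_mul_self_nonneg
      (CStarMatrix.ofMatrix (Matrix.of fun k j => if k = i₀ then b j else 0))
    ext i j
    simp [CStarMatrix.mul_apply, CStarMatrix.star_apply]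

theorem fell_matrix_algebra_positive_general
    {G : Type} [Group G]
    {A : Type} [NonUnitalNormedRing A] [StarRing A] [CStarRing A] [CompleteSpace A]
    [NormedSpace ℂ A] [IsScalarTower ℂ A A] [SMulCommClass ℂ A A] [StarModule ℂ A]
    (Bfib : G → Submodule ℂ A)
    (hclosed : ∀ t, IsClosed (Bfib t : Set A))
    (hmul : ∀ {s t : G} {a b : A}, a ∈ Bfib s → b ∈ Bfib t → a * b ∈ Bfib (s * t))
    (hstar : ∀ {t : G} {a : A}, a ∈ Bfib t → star a ∈ Bfib t⁻¹)
    (n : ℕ) (t : Fin n → G)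
    (b : Fin n → A) (hb : ∀ i, b i ∈ Bfib (t i)) :
    (∀ M : Matrix (Fin n) (Fin n) A, (∀ i j, M i j ∈ Bfib ((t i)⁻¹ * t j)) →
      ∀ N : Matrix (Fin n) (Fin n) A, (∀ i j, N i j ∈ Bfib ((t i)⁻¹ * t j)) →
        ∀ i j, (M * N) i j ∈ Bfib ((t i)⁻¹ * t j)) ∧
    (∀ M : Matrix (Fin n) (Fin n) A, (∀ i j, M i j ∈ Bfib ((t i)⁻¹ * t j)) →
        ∀ i j, M.conjTranspose i j ∈ Bfib ((t i)⁻¹ * t j)) ∧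
    (∀ i j, star (b i) * b j ∈ Bfib ((t i)⁻¹ * t j)) ∧
    (∃ N : Matrix (Fin n) (Fin n) A,
        (∀ i j, N i j ∈ Bfib ((t i)⁻¹ * t j)) ∧
        N.conjTranspose = N ∧
        Matrix.of (fun i j => star (b i) * b j) = N.conjTranspose * N) := by
  let _ : NonUnitalCStarAlgebra A := {}
  let _ : PartialOrder A := CStarAlgebra.spectralOrder A
  have : StarOrderedRing A := CStarAlgebra.spectralOrderedRing A
  have hgram : ∀ i j, star (b i) * b j ∈ Bfib ((t i)⁻¹ * t j) := fun i j =>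
    hmul (hstar (hb i)) (hb j)
  refine ⟨fun M hM N hN => mul_mem_fiberMatrices hmul hM hN,
    fun M hM => conjTranspose_mem_fiberMatrices (B := Bfib) hstar hM, hgram, ?_⟩
  obtain ⟨N, hNS, hNsa, hNN⟩ :=
    (fiberMatrixSubalgebra Bfib hmul hstar t).exists_isSelfAdjoint_star_mul_self_eq
      (isClosed_fiberMatrices hclosed) (CStarMatrix.ofMatrix_star_mul_nonneg b) hgram
  exact ⟨N, hNS, hNsa.star_eq, hNN.symm⟩

/-- Let `B` be a Fell bundle over `G` (realized as a grading of a
C*-algebra `A`), `H ≤ G`, and `t₁, …, t_n` elements of a single left coset `α` of `H`.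
The matrix space `M_𝔱(B) = {(M_{ij}) : M_{ij} ∈ B_{t_i⁻¹ t_j}}` is a *-subalgebra of
`Matrix (Fin n) (Fin n) A` (closed under multiplication and *-transpose, i.e. a
C*-algebra), and for `b_j ∈ B_{t_j}` the matrix `M = (b_i* b_j)` belongs to it and is
positive: `M = N* N` for some self-adjoint `N` in `M_𝔱(B)`. -/
theorem fell_matrix_algebra_positive
    {G : Type} [Group G]
    {A : Type} [NonUnitalNormedRing A] [StarRing A] [CStarRing A] [CompleteSpace A]
    [NormedSpace ℂ A] [IsScalarTower ℂ A A] [SMulCommClass ℂ A A] [StarModule ℂ A]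
    (Bfib : G → Submodule ℂ A)
    (hclosed : ∀ t, IsClosed (Bfib t : Set A))
    (hmul : ∀ {s t : G} {a b : A}, a ∈ Bfib s → b ∈ Bfib t → a * b ∈ Bfib (s * t))
    (hstar : ∀ {t : G} {a : A}, a ∈ Bfib t → star a ∈ Bfib t⁻¹)
    (H : Subgroup G) (n : ℕ) (t : Fin n → G)
    (hcoset : ∀ i j : Fin n, (t i)⁻¹ * t j ∈ H)
    (b : Fin n → A) (hb : ∀ i, b i ∈ Bfib (t i)) :
    (∀ M : Matrix (Fin n) (Fin n) A, (∀ i j, M i j ∈ Bfib ((t i)⁻¹ * t j)) →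
      ∀ N : Matrix (Fin n) (Fin n) A, (∀ i j, N i j ∈ Bfib ((t i)⁻¹ * t j)) →
        ∀ i j, (M * N) i j ∈ Bfib ((t i)⁻¹ * t j)) ∧
    (∀ M : Matrix (Fin n) (Fin n) A, (∀ i j, M i j ∈ Bfib ((t i)⁻¹ * t j)) →
        ∀ i j, M.conjTranspose i j ∈ Bfib ((t i)⁻¹ * t j)) ∧
    (∀ i j, star (b i) * b j ∈ Bfib ((t i)⁻¹ * t j)) ∧
    (∃ N : Matrix (Fin n) (Fin n) A,
        (∀ i j, N i j ∈ Bfib ((t i)⁻¹ * t j)) ∧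
        N.conjTranspose = N ∧
        Matrix.of (fun i j => star (b i) * b j) = N.conjTranspose * N) :=
  fell_matrix_algebra_positive_general Bfib hclosed hmul hstar n t b hb
end

section
/- There exists a Banach *-algebraic bundle B over Z/2Z whose unit fiber is the C*-algebra ℂ and whose norm satisfies ‖b*b‖ = ‖b‖² for all b, but whose only C*-completion is the zero bundle. Concretely: take B = ℂ × Z/2 with involution (λ,r)* = (conj λ, r) and product (λ,r)(μ,s) = (λμ, r+s) unless r = s = 1, in which case (λ,1)(μ,1) = (−λμ, 0). Then for any C*-completion ρ : B → C, both fibers of C are zero. -/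
/-!
In `B` the unit `e = (1,0)` is a self-adjoint idempotent and `x = (1,1)` is self-adjoint with
`x² = -e`. In a C*-completion this gives `x* x + e* e = -e + e = 0`, a vanishing sum of positive
elements, so the images of `e` and `x` are zero. Each fiber of the completion is the closure of
the range of a linear map on `ℂ` vanishing at `1`, hence is zero.
-/

namespace Stmt9

/-- The product of the Banach *-algebraic bundle `B = ℂ × ℤ/2`:
`(λ,r)(μ,s) = (λμ, r+s)` unless `r = s = 1`, in which case `(λ,1)(μ,1) = (−λμ, 0)`. -/
noncomputable def bmul (a b : ℂ × ZMod 2) : ℂ × ZMod 2 :=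
  if a.2 = 1 ∧ b.2 = 1 then (-(a.1 * b.1), 0) else (a.1 * b.1, a.2 + b.2)

/-- The involution `(λ,r)* = (conj λ, r)`. -/
def bstar (a : ℂ × ZMod 2) : ℂ × ZMod 2 := ((starRingEnd ℂ) a.1, a.2)

/-- The norm of the bundle: `‖(λ,r)‖ = |λ|`. -/
noncomputable def bnorm (a : ℂ × ZMod 2) : ℝ := ‖a.1‖

end Stmt9

theorem CStarRing.eq_zero_of_star_mul_self_add_star_mul_self_eq_zero {A : Type*}
    [NonUnitalCStarAlgebra A] {x y : A} (h : star x * x + star y * y = 0) :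
    x = 0 ∧ y = 0 := by
  let _ := CStarAlgebra.spectralOrder A
  have := CStarAlgebra.spectralOrderedRing A
  rw [add_eq_zero_iff_of_nonneg (star_mul_self_nonneg x) (star_mul_self_nonneg y)] at h
  simpa only [CStarRing.star_mul_self_eq_zero_iff] using h

theorem Submodule.eq_bot_of_closure_range_eq {R D : Type*} [Semiring R] [AddCommMonoid D]
    [Module R D] [TopologicalSpace D] [T1Space D] {p : Submodule R D} {f : R → D}
    (hf : IsLinearMap R f) (hf1 : f 1 = 0) (hp : closure (Set.range f) = p) : p = ⊥ := by
  have hzero : f = 0 := funext fun l => by simpa [hf1] using hf.map_smul l 1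
  rw [← SetLike.coe_set_eq, Submodule.bot_coe, ← hp, hzero, Set.range_zero, closure_singleton]

namespace Stmt9

theorem bnorm_bmul_bstar_self (a : ℂ × ZMod 2) : bnorm (bmul (bstar a) a) = bnorm a ^ 2 := by
  by_cases h : a.2 = 1 <;> simp [bmul, bstar, bnorm, h, sq]

theorem bmul_one_zero : bmul (1, 0) (1, 0) = (1, 0) := by
  simp [bmul]

theorem bmul_one_one : bmul (1, 1) (1, 1) = (-1, 0) := by
  simp [bmul]

theorem bstar_one (r : ZMod 2) : bstar (1, r) = (1, r) := by
  simp [bstar]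

/-- The bundle `B = ℂ × ℤ/2` above satisfies the C*-norm identity
`‖b* b‖ = ‖b‖²`, yet its only C*-completion is the zero bundle: for any Fell bundle
`{C_r}_{r ∈ ℤ/2}` over `ℤ/2` (realized as a grading `fibC` of a C*-algebra `D` by
closed subspaces) and any morphism `ρ` of Banach *-algebraic bundles from `B` with
fiberwise dense range, both fibers `C_0` and `C_1` are zero. -/
theorem only_zero_cstar_completion :
    (∀ a : ℂ × ZMod 2, bnorm (bmul (bstar a) a) = bnorm a ^ 2) ∧
    (∀ (D : Type) [NonUnitalNormedRing D] [StarRing D] [CStarRing D] [CompleteSpace D]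
        [NormedSpace ℂ D] [IsScalarTower ℂ D D] [SMulCommClass ℂ D D] [StarModule ℂ D]
        (fibC : ZMod 2 → Submodule ℂ D),
        (∀ r, IsClosed (fibC r : Set D)) →
        (∀ r s : ZMod 2, ∀ x ∈ fibC r, ∀ y ∈ fibC s, x * y ∈ fibC (r + s)) →
        (∀ r : ZMod 2, ∀ x ∈ fibC r, star x ∈ fibC (-r)) →
        ∀ ρ : ZMod 2 → ℂ → D,
          (∀ r, IsLinearMap ℂ (ρ r)) →
          (∀ (r : ZMod 2) (l : ℂ), ρ r l ∈ fibC r) →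
          (∀ r, closure (Set.range (ρ r)) = (fibC r : Set D)) →
          (∃ M : ℝ, ∀ a : ℂ × ZMod 2, ‖ρ a.2 a.1‖ ≤ M * bnorm a) →
          (∀ a b : ℂ × ZMod 2, ρ (bmul a b).2 (bmul a b).1 = ρ a.2 a.1 * ρ b.2 b.1) →
          (∀ a : ℂ × ZMod 2, ρ (bstar a).2 (bstar a).1 = star (ρ a.2 a.1)) →
          fibC 0 = ⊥ ∧ fibC 1 = ⊥) := by
  refine ⟨bnorm_bmul_bstar_self, ?_⟩
  intro D _ _ _ _ _ _ _ _ fibC _ _ _ ρ hlin _ hdense _ hmul hstar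
  let _ : NonUnitalCStarAlgebra D := {}
  have hself (r : ZMod 2) : star (ρ r 1) = ρ r 1 := by
    simpa only [bstar_one] using (hstar (1, r)).symm
  have hidem : ρ 0 1 * ρ 0 1 = ρ 0 1 := by
    simpa only [bmul_one_zero] using (hmul (1, 0) (1, 0)).symm
  have hsq : ρ 1 1 * ρ 1 1 = -ρ 0 1 := by
    rw [← hmul (1, 1) (1, 1), bmul_one_one]
    exact (hlin 0).mk'.map_neg 1
  obtain ⟨hx, he⟩ := CStarRing.eq_zero_of_star_mul_self_add_star_mul_self_eq_zero
    (x := ρ 1 1) (y := ρ 0 1) (by rw [hself, hself, hsq, hidem, neg_add_cancel])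
  exact ⟨Submodule.eq_bot_of_closure_range_eq (hlin 0) he (hdense 0),
    Submodule.eq_bot_of_closure_range_eq (hlin 1) hx (hdense 1)⟩

end Stmt9
end
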